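/- Let V be an n-dimensional vector space over the field F_2 of 2 elements with n ≥ 3 and fixed basis {b_1,...,b_n}. Then the set T_1 = {b_1,...,b_n} of basis vectors is a locating-dominating set of Γ(V). -/

import Mathlib

/-- A set `L` is a locating-dominating set of `G` if for every two distinct
vertices `u, v ∉ L` we have `∅ ≠ N(u) ∩ L ≠ N(v) ∩ L ≠ ∅`. -/
def IsLocDom {α : Type*} (G : SimpleGraph α) (L : Set α) : Prop :=
  ∀ ⦃u v : α⦄, u ∉ L → v ∉ L → u ≠ v →
    G.neighborSet u ∩ L ≠ ∅ ∧
    G.neighborSet u ∩ L ≠ G.neighborSet v ∩ L ∧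
    G.neighborSet v ∩ L ≠ ∅

/-- A set `C` is an identifying code of `G` if `N[u] ∩ C ≠ N[v] ∩ C`
for all distinct vertices `u, v`. -/
def IsIdCode {α : Type*} (G : SimpleGraph α) (C : Set α) : Prop :=
  ∀ ⦃u v : α⦄, u ≠ v →
    insert u (G.neighborSet u) ∩ C ≠ insert v (G.neighborSet v) ∩ C

/-- The location-domination number: minimum cardinality of a locating-dominating set. -/
noncomputable def locDomNum {α : Type*} (G : SimpleGraph α) : ℕ :=
  sInf {k : ℕ | ∃ L : Set α, IsLocDom G L ∧ L.ncard = k}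

/-- The identifying number: minimum cardinality of an identifying code. -/
noncomputable def idNum {α : Type*} (G : SimpleGraph α) : ℕ :=
  sInf {k : ℕ | ∃ C : Set α, IsIdCode G C ∧ C.ncard = k}
/-- The non-zero component graph of a vector space `W` with respect to a fixed
basis `b`: vertices are the non-zero vectors, and two distinct vertices are
adjacent iff some basis vector has non-zero coefficient in both of their
representations. -/
def nzcGraph {F W : Type*} [Field F] [AddCommGroup W] [Module F W] {n : ℕ}
    (b : Module.Basis (Fin n) F W) : SimpleGraph {w : W // w ≠ 0} where
  Adj u v := u ≠ v ∧ ∃ i, b.repr u.1 i ≠ 0 ∧ b.repr v.1 i ≠ 0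
  symm := ⟨by
    rintro u v ⟨h, i, hu, hv⟩
    exact ⟨h.symm, i, hv, hu⟩⟩
  loopless := ⟨by
    rintro u ⟨h, -⟩
    exact h rfl⟩

/-- `Tset b i` is the class `Tᵢ` of non-zero vectors having exactly `i`
non-zero coefficients in their representation w.r.t. the basis `b`. -/
def Tset {F W : Type*} [Field F] [AddCommGroup W] [Module F W] {n : ℕ}
    (b : Module.Basis (Fin n) F W) (i : ℕ) : Set {w : W // w ≠ 0} :=
  {v | (b.repr v.1).support.card = i}

/-!
Over `𝔽₂` a vector is determined by its support. A basis vector `bᵢ` is adjacent to a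
non-basis vertex `u` exactly when `i` lies in the support of `u`, so `N(u) ∩ T₁` is the set of
basis vectors indexed by the support of `u`: it is non-empty since `u ≠ 0`, and it determines `u`.
-/

open Module

theorem eq_one_of_ne_zero_of_card_eq_two {M : Type*} [GroupWithZero M] [Fintype M]
    (hM : Fintype.card M = 2) {x : M} (hx : x ≠ 0) : x = 1 := by
  have : Subsingleton Mˣ := Finite.card_le_one_iff_subsingleton.mp <| by
    rw [Nat.card_units, Nat.card_eq_fintype_card, hM]
  exact congrArg Units.val (Subsingleton.elim (Units.mk0 x hx) 1)

theorem Finsupp.eq_of_support_eq_of_card_eq_two {ι M : Type*} [GroupWithZero M] [Fintype M]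
    (hM : Fintype.card M = 2) {f g : ι →₀ M} (h : f.support = g.support) : f = g := by
  ext i
  by_cases hi : i ∈ f.support
  · have hi' : i ∈ g.support := h ▸ hi
    rw [eq_one_of_ne_zero_of_card_eq_two hM (Finsupp.mem_support_iff.mp hi),
      eq_one_of_ne_zero_of_card_eq_two hM (Finsupp.mem_support_iff.mp hi')]
  · have hi' : i ∉ g.support := h ▸ hi
    rw [Finsupp.notMem_support_iff.mp hi, Finsupp.notMem_support_iff.mp hi']

namespace nzcGraph

variable {F W : Type*} [Field F] [AddCommGroup W] [Module F W] {n : ℕ}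
  (b : Basis (Fin n) F W)

noncomputable def basisVertex (i : Fin n) : {w : W // w ≠ 0} := ⟨b i, b.ne_zero i⟩

theorem basisVertex_injective : Function.Injective (basisVertex b) :=
  fun _ _ h => b.injective (congrArg Subtype.val h)

theorem basisVertex_mem_Tset_one (i : Fin n) : basisVertex b i ∈ Tset b 1 := by
  simp [Tset, basisVertex, b.repr_self]

theorem adj_basisVertex_iff {u : {w : W // w ≠ 0}} (hu : u ∉ Tset b 1) (i : Fin n) :
    (nzcGraph b).Adj u (basisVertex b i) ↔ b.repr u.1 i ≠ 0 := by
  simp only [nzcGraph, basisVertex, b.repr_self]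
  constructor
  · rintro ⟨-, j, huj, hij⟩
    rwa [← (Finsupp.single_apply_ne_zero.mp hij).1]
  · intro hui
    exact ⟨fun h => hu (h ▸ basisVertex_mem_Tset_one b i), i, hui, by simp⟩

theorem support_repr_nonempty (u : {w : W // w ≠ 0}) : (b.repr u.1).support.Nonempty :=
  Finsupp.support_nonempty_iff.mpr <| by simpa using u.2

section CardTwo

variable [Fintype F] (hF : Fintype.card F = 2)
include hF

theorem Tset_one_eq_range_basisVertex : Tset b 1 = Set.range (basisVertex b) := by
  ext v
  constructor
  · intro hv
    obtain ⟨i, hi⟩ := Finset.card_eq_one.mp hv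
    refine ⟨i, Subtype.ext (b.repr.injective ?_)⟩
    refine Finsupp.eq_of_support_eq_of_card_eq_two hF ?_
    simp [basisVertex, hi]
  · rintro ⟨i, rfl⟩
    exact basisVertex_mem_Tset_one b i

theorem neighborSet_inter_Tset_one {u : {w : W // w ≠ 0}} (hu : u ∉ Tset b 1) :
    (nzcGraph b).neighborSet u ∩ Tset b 1 = basisVertex b '' (b.repr u.1).support := by
  rw [Tset_one_eq_range_basisVertex b hF]
  ext v
  constructor
  · rintro ⟨hv, i, rfl⟩
    exact ⟨i, Finsupp.mem_support_iff.mpr ((adj_basisVertex_iff b hu i).mp hv), rfl⟩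
  · rintro ⟨i, hi, rfl⟩
    exact ⟨(adj_basisVertex_iff b hu i).mpr (Finsupp.mem_support_iff.mp hi), i, rfl⟩

end CardTwo

end nzcGraph

open nzcGraph

theorem stmt_10_general {F W : Type*} [Field F] [Fintype F] (hq : Fintype.card F = 2)
    [AddCommGroup W] [Module F W] {n : ℕ} (b : Module.Basis (Fin n) F W) :
    Tset b 1 = {v : {w : W // w ≠ 0} | v.1 ∈ Set.range b} ∧
      IsLocDom (nzcGraph b) (Tset b 1) := by
  refine ⟨?_, fun u v hu hv huv => ?_⟩
  · rw [Tset_one_eq_range_basisVertex b hq]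
    ext v
    exact ⟨fun ⟨i, hi⟩ => ⟨i, hi ▸ rfl⟩, fun ⟨i, hi⟩ => ⟨i, Subtype.ext hi⟩⟩
  rw [neighborSet_inter_Tset_one b hq hu, neighborSet_inter_Tset_one b hq hv]
  refine ⟨((support_repr_nonempty b u).to_set.image _).ne_empty, fun h => huv ?_,
    ((support_repr_nonempty b v).to_set.image _).ne_empty⟩
  have hsupp := Finset.coe_injective ((basisVertex_injective b).image_injective h)
  exact Subtype.ext (b.repr.injective (Finsupp.eq_of_support_eq_of_card_eq_two hq hsupp))

/-- For `n ≥ 3` over `F₂`, the set `T₁` of basis vectors is a locating-dominating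
set of `Γ(V)`. -/
theorem stmt_10 {F W : Type*} [Field F] [Fintype F] (hq : Fintype.card F = 2)
    [AddCommGroup W] [Module F W] {n : ℕ} (hn : 3 ≤ n) (b : Module.Basis (Fin n) F W) :
    Tset b 1 = {v : {w : W // w ≠ 0} | v.1 ∈ Set.range b} ∧
      IsLocDom (nzcGraph b) (Tset b 1) :=
  stmt_10_general hq b
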